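/- arXiv:1702.08697 — 2 statements merged into one kernel-verified Lean document; each statement's English description precedes it below -/
import Mathlib

section
/- Let $a<b$ and let $g:[a,b]\to\mathbb{R}$ be continuous with $g(t)>0$ for all $t$. If $w:[a,b]\to\mathbb{R}$ is continuous and is a viscosity subsolution of $|w'|=g$ on $(a,b)$, then for all $s,t\in[a,b]$ one has $|w(t)-w(s)|\le\left|\int_s^t g(r)\,dr\right|$; in particular $w$ is Lipschitz continuous on $[a,b]$ with Lipschitz constant $\max_{[a,b]}g$. -/
/-!
For `s ≤ t < b` and `ε > 0`, the primitive `φ` of `g + ε` satisfies `φ' > g`, so no test function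
`φ + K p` with `p' ≥ 0` can touch `w` from above inside `(a, b)`. Taking `p` a smooth ramp that
vanishes up to `t` and `K` large, the maximum of `w - φ - K p` on `[s, b]` must sit at `s`, whence
`w t - w s ≤ φ t - φ s = ∫ₛᵗ g + ε (t - s)`. Letting `ε → 0` and `t → b` gives the one-sided bound;
applying it to the reflections `r ↦ w (a + b - r)`, `r ↦ g (a + b - r)` gives the other side.
-/

/-- `w` is a viscosity subsolution of `|w'| = g` on `(a,b)`. -/
def ViscositySubsolution (a b : ℝ) (g w : ℝ → ℝ) : Prop :=
  ∀ t0 ∈ Set.Ioo a b, ∀ φ : ℝ → ℝ, Differentiable ℝ φ →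
    IsLocalMax (fun t => w t - φ t) t0 → |deriv φ t0| ≤ g t0

open Set Filter Topology

theorem ContinuousOn.exists_continuous_eqOn_Icc {α β : Type*} [LinearOrder α]
    [TopologicalSpace α] [OrderTopology α] [TopologicalSpace β] {f : α → β} {a b : α}
    (hf : ContinuousOn f (Icc a b)) (hab : a ≤ b) :
    ∃ F : α → β, Continuous F ∧ EqOn F f (Icc a b) :=
  ⟨IccExtend hab ((Icc a b).domRestrict f),
    (continuousOn_iff_continuous_domRestrict.1 hf).Icc_extend', fun _ hr => IccExtend_of_mem _ _ hr⟩

theorem ContinuousOn.le_left_of_forall_not_isLocalMax {α β : Type*}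
    [ConditionallyCompleteLinearOrder α] [TopologicalSpace α] [OrderTopology α] [LinearOrder β]
    [TopologicalSpace β] [OrderClosedTopology β] {h : α → β} {s u : α} (hsu : s ≤ u)
    (hc : ContinuousOn h (Icc s u)) (hu : h u < h s)
    (hloc : ∀ r ∈ Ioo s u, ¬IsLocalMax h r) {t : α} (ht : t ∈ Icc s u) : h t ≤ h s := by
  obtain ⟨r, hr, hmax⟩ := isCompact_Icc.exists_isMaxOn (nonempty_Icc.2 hsu) hc
  obtain rfl : r = s := by
    rcases hr.1.eq_or_lt with rfl | hsr
    · rfl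
    rcases hr.2.eq_or_lt with rfl | hru
    · exact absurd (hmax (left_mem_Icc.2 hsu)) hu.not_ge
    · exact absurd (hmax.isLocalMax (Icc_mem_nhds hsr hru)) (hloc r ⟨hsr, hru⟩)
  exact hmax ht

namespace ViscositySubsolution

variable {a b : ℝ} {g w : ℝ → ℝ}

theorem not_isLocalMax (hsub : ViscositySubsolution a b g w) {φ : ℝ → ℝ}
    (hφ : Differentiable ℝ φ) {t₀ : ℝ} (ht₀ : t₀ ∈ Ioo a b) (hlt : g t₀ < deriv φ t₀) :
    ¬IsLocalMax (fun t => w t - φ t) t₀ := fun hmax =>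
  (hlt.trans_le (le_abs_self _)).not_ge (hsub t₀ ht₀ φ hφ hmax)

theorem sub_le_sub_of_lt_deriv (hsub : ViscositySubsolution a b g w)
    (hw : ContinuousOn w (Icc a b)) {φ : ℝ → ℝ} (hφ : Differentiable ℝ φ)
    (hlt : ∀ r ∈ Ioo a b, g r < deriv φ r) {s t : ℝ} (has : a ≤ s) (hst : s ≤ t)
    (htb : t < b) : w t - w s ≤ φ t - φ s := by
  set p : ℝ → ℝ := fun r => Real.smoothTransition (r - t)
  have hp : Differentiable ℝ p := fun r =>
    (Real.smoothTransition.contDiff (n := 1)).differentiable one_ne_zero _ |>.comp r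
      (differentiableAt_id.sub_const t)
  have hp_mono : Monotone p := fun x y hxy => Real.smoothTransition.monotone (by linarith)
  have hp_zero : ∀ r ≤ t, p r = 0 := fun r hr =>
    Real.smoothTransition.zero_of_nonpos (by linarith)
  have hpb : 0 < p b := Real.smoothTransition.pos_of_pos (by linarith)
  set D := w b - φ b - (w s - φ s)
  set K := (|D| + 1) / p b
  have hK : 0 ≤ K := by positivity
  set ψ : ℝ → ℝ := fun r => φ r + K * p r
  have hψ : Differentiable ℝ ψ := hφ.add (hp.const_mul K)
  have hψ_deriv : ∀ r, deriv φ r ≤ deriv ψ r := fun r => by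
    have : HasDerivAt ψ (deriv φ r + K * deriv p r) r :=
      (hφ r).hasDerivAt.add ((hp r).hasDerivAt.const_mul K)
    rw [this.deriv]
    exact le_add_of_nonneg_right (mul_nonneg hK hp_mono.deriv_nonneg)
  have hb : w b - ψ b < w s - ψ s := by
    have : K * p b = |D| + 1 := div_mul_cancel₀ _ hpb.ne'
    simp only [ψ, hp_zero s hst, this]
    linarith [le_abs_self D]
  have hmax_left := ContinuousOn.le_left_of_forall_not_isLocalMax (h := fun r => w r - ψ r)
    (hst.trans htb.le)
    ((hw.mono (Icc_subset_Icc_left has)).sub hψ.continuous.continuousOn) hb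
    (fun r hr => hsub.not_isLocalMax hψ ⟨has.trans_lt hr.1, hr.2⟩
      ((hlt r ⟨has.trans_lt hr.1, hr.2⟩).trans_le (hψ_deriv r))) ⟨hst, htb.le⟩
  simp only [ψ, hp_zero s hst, hp_zero t le_rfl] at hmax_left
  linarith

theorem sub_le_integral_of_lt (hsub : ViscositySubsolution a b g w)
    (hg : ContinuousOn g (Icc a b)) (hw : ContinuousOn w (Icc a b)) {s t : ℝ} (has : a ≤ s)
    (hst : s ≤ t) (htb : t < b) : w t - w s ≤ ∫ r in s..t, g r := by
  obtain ⟨G, hG, hGg⟩ := hg.exists_continuous_eqOn_Icc (by linarith)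
  have hGg_int : ∫ r in s..t, G r = ∫ r in s..t, g r := intervalIntegral.integral_congr
    (hGg.mono (by rw [uIcc_of_le hst]; exact Icc_subset_Icc has htb.le))
  have hε : ∀ ε > 0, w t - w s ≤ (∫ r in s..t, g r) + ε * (t - s) := by
    intro ε hε
    have hφ : ∀ r, HasDerivAt (fun r => (∫ x in s..r, G x) + ε * r) (G r + ε) r := fun r =>
      (hG.integral_hasStrictDerivAt s r).hasDerivAt.add
        (((hasDerivAt_id' r).const_mul ε).congr_deriv (mul_one ε))
    have := hsub.sub_le_sub_of_lt_deriv hw (fun r => (hφ r).differentiableAt)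
      (fun r hr => by rw [(hφ r).deriv, hGg ⟨hr.1.le, hr.2.le⟩]; linarith) has hst htb
    simp only [intervalIntegral.integral_same, hGg_int] at this
    linarith
  have hlim : Tendsto (fun ε => (∫ r in s..t, g r) + ε * (t - s)) (𝓝[>] 0)
      (𝓝 (∫ r in s..t, g r)) := by
    have : Continuous fun ε : ℝ => (∫ r in s..t, g r) + ε * (t - s) := by fun_prop
    simpa using (this.tendsto 0).mono_left nhdsWithin_le_nhds
  exact ge_of_tendsto hlim (eventually_nhdsWithin_of_forall hε)

theorem sub_le_integral (hsub : ViscositySubsolution a b g w)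
    (hg : ContinuousOn g (Icc a b)) (hw : ContinuousOn w (Icc a b)) {s t : ℝ} (has : a ≤ s)
    (hst : s ≤ t) (htb : t ≤ b) : w t - w s ≤ ∫ r in s..t, g r := by
  rcases htb.lt_or_eq with htb | rfl
  · exact hsub.sub_le_integral_of_lt hg hw has hst htb
  rcases hst.eq_or_lt with rfl | hst'
  · simp
  have hprim : ContinuousOn (fun t' => ∫ r in s..t', g r) (Icc s t) := by
    rw [← uIcc_of_le hst]
    exact intervalIntegral.continuousOn_primitive_interval
      (by rw [uIcc_of_le hst]; exact (hg.mono (Icc_subset_Icc_left has)).integrableOn_Icc)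
  have hcont : ContinuousOn (fun t' => w t' - w s - ∫ r in s..t', g r) (Icc s t) :=
    ((hw.mono (Icc_subset_Icc_left has)).sub continuousOn_const).sub hprim
  have hle := ContinuousWithinAt.closure_le (s := Ico s t)
    (by rw [closure_Ico hst'.ne]; exact right_mem_Icc.2 hst)
    ((hcont t (right_mem_Icc.2 hst)).mono Ico_subset_Icc_self) continuousWithinAt_const
    fun t' ht' => sub_nonpos.2 (hsub.sub_le_integral_of_lt hg hw has ht'.1 ht'.2)
  linarith

theorem comp_const_sub (hsub : ViscositySubsolution a b g w) :
    ViscositySubsolution a b (fun r => g (a + b - r)) (fun r => w (a + b - r)) := by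
  intro t₀ ht₀ φ hφ hmax
  have ht₁ : a + b - t₀ ∈ Ioo a b := ⟨by linarith [ht₀.2], by linarith [ht₀.1]⟩
  have hmax' : IsLocalMax (fun t => w t - φ (a + b - t)) (a + b - t₀) := by
    rw [← sub_sub_cancel (a + b) t₀] at hmax
    simpa [Function.comp_def] using
      hmax.comp_continuous (continuous_const.sub continuous_id).continuousAt
  have := hsub _ ht₁ (fun t => φ (a + b - t))
    (hφ.comp ((differentiable_const _).sub differentiable_id)) hmax'
  rwa [deriv_comp_const_sub, sub_sub_cancel, abs_neg] at this

theorem abs_sub_le_integral (hsub : ViscositySubsolution a b g w)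
    (hg : ContinuousOn g (Icc a b)) (hw : ContinuousOn w (Icc a b)) {s t : ℝ} (has : a ≤ s)
    (hst : s ≤ t) (htb : t ≤ b) : |w t - w s| ≤ ∫ r in s..t, g r := by
  have hρ : MapsTo (fun r => a + b - r) (Icc a b) (Icc a b) := fun r hr =>
    ⟨by linarith [hr.2], by linarith [hr.1]⟩
  have hrefl := hsub.comp_const_sub.sub_le_integral (hg.comp (by fun_prop) hρ)
    (hw.comp (by fun_prop) hρ) (s := a + b - t) (t := a + b - s) (by linarith) (by linarith)
    (by linarith)
  rw [intervalIntegral.integral_comp_sub_left (fun r => g r)] at hrefl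
  simp only [sub_sub_cancel] at hrefl
  exact abs_sub_le_iff.2 ⟨hsub.sub_le_integral hg hw has hst htb, hrefl⟩

end ViscositySubsolution

theorem integral_le_sSup_image_mul {a b s t : ℝ} {g : ℝ → ℝ} (hg : ContinuousOn g (Icc a b))
    (has : a ≤ s) (hst : s ≤ t) (htb : t ≤ b) :
    ∫ r in s..t, g r ≤ sSup (g '' Icc a b) * (t - s) := by
  have hM : ∀ r ∈ Icc s t, g r ≤ sSup (g '' Icc a b) := fun r hr =>
    le_csSup (isCompact_Icc.image_of_continuousOn hg).bddAbove
      (mem_image_of_mem g ⟨has.trans hr.1, hr.2.trans htb⟩)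
  calc ∫ r in s..t, g r ≤ ∫ _ in s..t, sSup (g '' Icc a b) :=
        intervalIntegral.integral_mono_on hst
          ((hg.mono (Icc_subset_Icc has htb)).intervalIntegrable_of_Icc hst)
          intervalIntegrable_const hM
    _ = sSup (g '' Icc a b) * (t - s) := by simp [mul_comm]

theorem subsolution_lipschitz_general (a b : ℝ) (g w : ℝ → ℝ)
    (hg : ContinuousOn g (Set.Icc a b))
    (hw : ContinuousOn w (Set.Icc a b))
    (hsub : ViscositySubsolution a b g w) :
    (∀ s ∈ Set.Icc a b, ∀ t ∈ Set.Icc a b, |w t - w s| ≤ |∫ r in s..t, g r|) ∧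
    (∀ s ∈ Set.Icc a b, ∀ t ∈ Set.Icc a b,
      |w t - w s| ≤ (sSup (g '' Set.Icc a b)) * |t - s|) := by
  refine ⟨fun s hs t ht => ?_, fun s hs t ht => ?_⟩
  · wlog hst : s ≤ t generalizing s t
    · rw [abs_sub_comm, intervalIntegral.integral_symm, abs_neg]
      exact this t ht s hs (le_of_not_ge hst)
    exact (hsub.abs_sub_le_integral hg hw hs.1 hst ht.2).trans (le_abs_self _)
  · wlog hst : s ≤ t generalizing s t
    · rw [abs_sub_comm, abs_sub_comm t]
      exact this t ht s hs (le_of_not_ge hst)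
    rw [abs_of_nonneg (sub_nonneg.2 hst)]
    exact (hsub.abs_sub_le_integral hg hw hs.1 hst ht.2).trans
      (integral_le_sSup_image_mul hg hs.1 hst ht.2)

theorem subsolution_lipschitz (a b : ℝ) (hab : a < b) (g w : ℝ → ℝ)
    (hg : ContinuousOn g (Set.Icc a b)) (hgpos : ∀ t ∈ Set.Icc a b, 0 < g t)
    (hw : ContinuousOn w (Set.Icc a b))
    (hsub : ViscositySubsolution a b g w) :
    (∀ s ∈ Set.Icc a b, ∀ t ∈ Set.Icc a b, |w t - w s| ≤ |∫ r in s..t, g r|) ∧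
    (∀ s ∈ Set.Icc a b, ∀ t ∈ Set.Icc a b,
      |w t - w s| ≤ (sSup (g '' Set.Icc a b)) * |t - s|) :=
  subsolution_lipschitz_general a b g w hg hw hsub
end

section
/- Let $a<b$ and let $g:[a,b]\to\mathbb{R}$ be continuous with $g(t)>0$ for all $t$. If $w:[a,b]\to\mathbb{R}$ is continuous, is a viscosity solution of $|w'|=g$ on $(a,b)$, and satisfies $w(a)=w(b)=0$, then $w(t)=\min\left(\int_a^t g(r)\,dr,\ \int_t^b g(r)\,dr\right)$ for all $t\in[a,b]$; i.e., the function $d(t)=\min(\int_a^t g,\int_t^b g)$ is the unique continuous viscosity solution of $|u'|=g$ on $(a,b)$ vanishing at both endpoints. -/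
/-- `w` is a viscosity supersolution of `|w'| = g` on `(a,b)`. -/
def ViscositySupersolution (a b : ℝ) (g w : ℝ → ℝ) : Prop :=
  ∀ t0 ∈ Set.Ioo a b, ∀ φ : ℝ → ℝ, Differentiable ℝ φ →
    IsLocalMin (fun t => w t - φ t) t0 → g t0 ≤ |deriv φ t0|

/-! Let `G' = g`. For a subsolution, `w - G` cannot increase and `w + G` cannot decrease on any
subinterval: otherwise an exponential test function `φ` with `φ' > 0` (resp. its reflection)
pushes a maximum of `w - G - φ` into the interior, where the subsolution inequality fails. With
`w a = w b = 0` this gives `w ≤ min (G - G a) (G b - G)`.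

Conversely, writing that tent as `h - |G - c|`, the function `h - log (2 cosh (k (G - c))) / k`
lies within `log 2 / k` below it, is `≤ 0` at the endpoints, and has derivative
`-tanh (k (G - c)) g`, of modulus `< g`. Hence `w` minus it cannot have an interior minimum, so
its minimum is at an endpoint and is `≥ 0`; letting `k → ∞` gives `w ≥ min (G - G a) (G b - G)`.
-/

open Real Set Filter Topology

section TestFunctions

variable {v : ℝ → ℝ} {s t : ℝ}

lemma exists_isLocalMax_sub_deriv_pos (hst : s < t) (hv : ContinuousOn v (Icc s t))
    (hvst : v s < v t) :
    ∃ x₀ ∈ Ioo s t, ∃ φ : ℝ → ℝ, Differentiable ℝ φ ∧ 0 < deriv φ x₀ ∧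
      IsLocalMax (fun x => v x - φ x) x₀ := by
  obtain ⟨x₁, hvx₁, hx₁⟩ : ∃ x₁, v s < v x₁ ∧ x₁ ∈ Ioo s t := by
    have := right_nhdsWithin_Ioo_neBot hst
    exact (((hv t (right_mem_Icc.2 hst.le)).mono Ioo_subset_Icc_self).eventually
      (lt_mem_nhds hvst) |>.and self_mem_nhdsWithin).exists
  -- `φ x₁ = δ < v x₁ - v s` and `φ t - φ x₁ > v t - v x₁`: `v - φ` beats both endpoints at `x₁`.
  set δ := (v x₁ - v s) / 2
  have hδ : 0 < δ := by simp only [δ]; linarith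
  have htx₁ : 0 < t - x₁ := by linarith [hx₁.2]
  set K := (|v t - v x₁| + 1) / (δ * (t - x₁))
  have hK : 0 < K := by positivity
  set φ : ℝ → ℝ := fun x => δ * exp (K * (x - x₁))
  have hφ : ∀ x, HasDerivAt φ (δ * (exp (K * (x - x₁)) * K)) x := fun x =>
    (((hasDerivAt_id' x).sub_const x₁).const_mul K).exp.const_mul δ |>.congr_deriv (by ring)
  have hφd : Differentiable ℝ φ := fun x => (hφ x).differentiableAt
  have hφx₁ : φ x₁ = δ := by simp only [φ, sub_self, mul_zero, exp_zero, mul_one]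
  have hφs : v s - φ s < v x₁ - φ x₁ := by
    have hφs_pos : 0 < φ s := by positivity
    have hδ_lt : δ < v x₁ - v s := by simp only [δ]; linarith
    linarith
  have hφt : v t - φ t < v x₁ - φ x₁ := by
    have hgrow : δ * (K * (t - x₁)) = |v t - v x₁| + 1 := by
      simp only [K]; field_simp
    have hexp := mul_le_mul_of_nonneg_left (add_one_le_exp (K * (t - x₁))) hδ.le
    have hφt_eq : φ t = δ * exp (K * (t - x₁)) := rfl
    linarith [le_abs_self (v t - v x₁)]
  obtain ⟨x₀, hx₀, hmax⟩ := isCompact_Icc.exists_isMaxOn (nonempty_Icc.2 hst.le)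
    (hv.sub hφd.continuous.continuousOn)
  have hmax₁ := hmax (Ioo_subset_Icc_self hx₁)
  have hx₀' : x₀ ∈ Ioo s t := by
    rcases eq_endpoints_or_mem_Ioo_of_mem_Icc hx₀ with rfl | rfl | h
    · exact absurd hmax₁ hφs.not_ge
    · exact absurd hmax₁ hφt.not_ge
    · exact h
  exact ⟨x₀, hx₀', φ, hφd, by rw [(hφ x₀).deriv]; positivity,
    hmax.isLocalMax (Icc_mem_nhds hx₀'.1 hx₀'.2)⟩

lemma exists_isLocalMax_sub_deriv_neg (hst : s < t) (hv : ContinuousOn v (Icc s t))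
    (hvts : v t < v s) :
    ∃ x₀ ∈ Ioo s t, ∃ φ : ℝ → ℝ, Differentiable ℝ φ ∧ deriv φ x₀ < 0 ∧
      IsLocalMax (fun x => v x - φ x) x₀ := by
  have hv' : ContinuousOn (fun x => v (-x)) (Icc (-t) (-s)) :=
    hv.comp continuousOn_neg fun x hx => ⟨le_neg.1 hx.2, neg_le.1 hx.1⟩
  obtain ⟨y₀, hy₀, φ, hφ, hderiv, hmax⟩ :=
    exists_isLocalMax_sub_deriv_pos (neg_lt_neg hst) hv' (by simpa using hvts)
  refine ⟨-y₀, ⟨lt_neg.1 hy₀.2, neg_lt.1 hy₀.1⟩, fun x => φ (-x), hφ.comp differentiable_neg,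
    by rw [deriv_comp_neg, neg_neg]; linarith, ?_⟩
  rw [← neg_neg y₀] at hmax
  simpa [Function.comp_def] using hmax.comp_continuous continuousAt_neg

end TestFunctions

section Monotonicity

variable {u : ℝ → ℝ} {a b : ℝ}

lemma antitoneOn_of_isLocalMax_sub_deriv_nonpos (hu : ContinuousOn u (Icc a b))
    (h : ∀ x₀ ∈ Ioo a b, ∀ φ : ℝ → ℝ, Differentiable ℝ φ →
      IsLocalMax (fun x => u x - φ x) x₀ → deriv φ x₀ ≤ 0) :
    AntitoneOn u (Icc a b) := by
  intro s hs t ht hst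
  rcases hst.eq_or_lt with rfl | hst
  · rfl
  by_contra! hlt
  obtain ⟨x₀, hx₀, φ, hφ, hpos, hmax⟩ :=
    exists_isLocalMax_sub_deriv_pos hst (hu.mono (Icc_subset_Icc hs.1 ht.2)) hlt
  exact (h x₀ (Ioo_subset_Ioo hs.1 ht.2 hx₀) φ hφ hmax).not_gt hpos

lemma monotoneOn_of_isLocalMax_sub_deriv_nonneg (hu : ContinuousOn u (Icc a b))
    (h : ∀ x₀ ∈ Ioo a b, ∀ φ : ℝ → ℝ, Differentiable ℝ φ →
      IsLocalMax (fun x => u x - φ x) x₀ → 0 ≤ deriv φ x₀) :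
    MonotoneOn u (Icc a b) := by
  intro s hs t ht hst
  rcases hst.eq_or_lt with rfl | hst
  · rfl
  by_contra! hlt
  obtain ⟨x₀, hx₀, φ, hφ, hneg, hmax⟩ :=
    exists_isLocalMax_sub_deriv_neg hst (hu.mono (Icc_subset_Icc hs.1 ht.2)) hlt
  exact (h x₀ (Ioo_subset_Ioo hs.1 ht.2 hx₀) φ hφ hmax).not_gt hneg

end Monotonicity

section Viscosity

variable {a b : ℝ} {g w G : ℝ → ℝ}

lemma ViscositySubsolution.antitoneOn_sub (hsub : ViscositySubsolution a b g w)
    (hw : ContinuousOn w (Icc a b)) (hG : Differentiable ℝ G)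
    (hG' : ∀ x ∈ Ioo a b, deriv G x = g x) :
    AntitoneOn (fun x => w x - G x) (Icc a b) := by
  refine antitoneOn_of_isLocalMax_sub_deriv_nonpos (hw.sub hG.continuous.continuousOn) ?_
  intro x₀ hx₀ φ hφ hmax
  have h := hsub x₀ hx₀ (fun x => φ x + G x) (hφ.add hG)
    (by simpa only [sub_sub, add_comm] using hmax)
  rw [deriv_fun_add (hφ x₀) (hG x₀), hG' x₀ hx₀] at h
  linarith [le_abs_self (deriv φ x₀ + g x₀)]

lemma ViscositySubsolution.monotoneOn_add (hsub : ViscositySubsolution a b g w)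
    (hw : ContinuousOn w (Icc a b)) (hG : Differentiable ℝ G)
    (hG' : ∀ x ∈ Ioo a b, deriv G x = g x) :
    MonotoneOn (fun x => w x + G x) (Icc a b) := by
  refine monotoneOn_of_isLocalMax_sub_deriv_nonneg (hw.add hG.continuous.continuousOn) ?_
  intro x₀ hx₀ φ hφ hmax
  have h := hsub x₀ hx₀ (fun x => φ x - G x) (hφ.sub hG)
    (by simpa only [sub_sub_eq_add_sub, add_sub_right_comm] using hmax)
  rw [deriv_fun_sub (hφ x₀) (hG x₀), hG' x₀ hx₀] at h
  linarith [neg_abs_le (deriv φ x₀ - g x₀)]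

lemma ViscositySupersolution.le_of_abs_deriv_lt {v : ℝ → ℝ}
    (hsuper : ViscositySupersolution a b g w) (hw : ContinuousOn w (Icc a b))
    (hv : Differentiable ℝ v) (hv' : ∀ x ∈ Ioo a b, |deriv v x| < g x)
    (ha : v a ≤ w a) (hb : v b ≤ w b) {t : ℝ} (ht : t ∈ Icc a b) : v t ≤ w t := by
  obtain ⟨x₀, hx₀, hmin⟩ := isCompact_Icc.exists_isMinOn ⟨t, ht⟩
    (hw.sub hv.continuous.continuousOn)
  have h₀ : 0 ≤ w x₀ - v x₀ := by
    rcases eq_endpoints_or_mem_Ioo_of_mem_Icc hx₀ with rfl | rfl | hx₀'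
    · linarith
    · linarith
    · exact absurd (hsuper x₀ hx₀' v hv (hmin.isLocalMin (Icc_mem_nhds hx₀'.1 hx₀'.2)))
        (hv' x₀ hx₀').not_ge
  linarith [show w x₀ - v x₀ ≤ w t - v t from hmin ht]

end Viscosity

noncomputable def smoothAbs (k z : ℝ) : ℝ := log (2 * cosh (k * z)) / k

section SmoothAbs

variable {k : ℝ}

lemma abs_le_smoothAbs (hk : 0 < k) (z : ℝ) : |z| ≤ smoothAbs k z := by
  have hexp : exp (|z| * k) ≤ 2 * cosh (k * z) := by
    rw [cosh_eq, mul_comm]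
    rcases abs_cases z with ⟨hz, -⟩ | ⟨hz, -⟩ <;> rw [hz]
    · linarith [exp_pos (-(k * z))]
    · rw [mul_neg]
      linarith [exp_pos (k * z)]
  rw [smoothAbs, le_div_iff₀ hk, ← log_exp (|z| * k)]
  exact log_le_log (exp_pos _) hexp

lemma smoothAbs_le (hk : 0 < k) (z : ℝ) : smoothAbs k z ≤ |z| + log 2 / k := by
  have hcosh : 2 * cosh (k * z) ≤ 2 * exp (|z| * k) := by
    rw [cosh_eq]
    have h₁ : exp (k * z) ≤ exp (|z| * k) := exp_le_exp.2 (by nlinarith [le_abs_self z])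
    have h₂ : exp (-(k * z)) ≤ exp (|z| * k) := exp_le_exp.2 (by nlinarith [neg_abs_le z])
    linarith
  rw [smoothAbs, div_le_iff₀ hk, add_mul, div_mul_cancel₀ _ hk.ne', ← log_exp (|z| * k),
    add_comm, ← log_mul two_ne_zero (exp_pos _).ne']
  exact log_le_log (by positivity [cosh_pos (k * z)]) hcosh

lemma hasDerivAt_smoothAbs (hk : k ≠ 0) (z : ℝ) :
    HasDerivAt (smoothAbs k) (tanh (k * z)) z := by
  have h := ((((hasDerivAt_id' z).const_mul k).cosh.const_mul 2).log
    (by positivity [cosh_pos (k * z)])).div_const k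
  refine h.congr_deriv ?_
  rw [tanh_eq_sinh_div_cosh]
  field_simp [(cosh_pos (k * z)).ne']

end SmoothAbs

lemma exists_hasDerivAt_of_continuousOn {a b : ℝ} (hab : a ≤ b) {g : ℝ → ℝ}
    (hg : ContinuousOn g (Icc a b)) :
    ∃ G : ℝ → ℝ, Differentiable ℝ G ∧ ∀ x ∈ Icc a b, HasDerivAt G (g x) x := by
  set g' := fun x => g (projIcc a b hab x)
  have hg' : Continuous g' :=
    hg.comp_continuous (continuous_subtype_val.comp continuous_projIcc)
      fun x => (projIcc a b hab x).2
  refine ⟨fun x => ∫ r in a..x, g' r,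
    fun x => (hg'.integral_hasStrictDerivAt a x).hasDerivAt.differentiableAt, fun x hx => ?_⟩
  simpa [g', projIcc_of_mem hab hx] using (hg'.integral_hasStrictDerivAt a x).hasDerivAt

lemma min_sub_eq_sub_abs (x p q : ℝ) :
    min (x - p) (q - x) = (q - p) / 2 - |x - (p + q) / 2| := by
  rcases le_total (x - p) (q - x) with h | h
  · rw [min_eq_left h, abs_of_nonpos (by linarith)]; ring
  · rw [min_eq_right h, abs_of_nonneg (by linarith)]; ring

lemma ViscositySupersolution.min_sub_le {a b : ℝ} {g w G : ℝ → ℝ}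
    (hsuper : ViscositySupersolution a b g w) (hw : ContinuousOn w (Icc a b))
    (hG : Differentiable ℝ G) (hG' : ∀ x ∈ Ioo a b, deriv G x = g x)
    (hgpos : ∀ x ∈ Ioo a b, 0 < g x) (hwa : w a = 0) (hwb : w b = 0) {t : ℝ}
    (ht : t ∈ Icc a b) :
    min (G t - G a) (G b - G t) ≤ w t := by
  set c := (G a + G b) / 2
  set h := (G b - G a) / 2
  refine le_of_forall_pos_le_add fun ε hε => ?_
  set k := log 2 / ε
  have hk : 0 < k := div_pos (log_pos one_lt_two) hε
  set v := fun x => h - smoothAbs k (G x - c)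
  have hv : ∀ x, HasDerivAt v (-(tanh (k * (G x - c)) * deriv G x)) x := fun x =>
    ((hasDerivAt_smoothAbs hk.ne' _).comp x ((hG x).hasDerivAt.sub_const c)).const_sub h
  have hv_end : ∀ x, |G x - c| = |h| → v x ≤ 0 := fun x hx => by
    linarith [abs_le_smoothAbs hk (G x - c), le_abs_self h]
  have hva : v a ≤ w a :=
    hwa ▸ hv_end a (by rw [show G a - c = -h by simp only [c, h]; ring, abs_neg])
  have hvb : v b ≤ w b := hwb ▸ hv_end b (by congr 1; simp only [c, h]; ring)
  have hvw := hsuper.le_of_abs_deriv_lt hw (v := v) (fun x => (hv x).differentiableAt)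
    (fun x hx => ?_) hva hvb ht
  · calc min (G t - G a) (G b - G t) = h - |G t - c| := min_sub_eq_sub_abs _ _ _
      _ ≤ v t + ε := by
        have hkε : log 2 / k = ε := by simp only [k]; field_simp
        linarith [smoothAbs_le hk (G t - c)]
      _ ≤ w t + ε := by gcongr
  · rw [(hv x).deriv, hG' x hx, abs_neg, abs_mul, abs_of_pos (hgpos x hx)]
    exact mul_lt_of_lt_one_left (hgpos x hx) (abs_tanh_lt_one _)

theorem eikonal_uniqueness (a b : ℝ) (hab : a < b) (g w : ℝ → ℝ)
    (hg : ContinuousOn g (Set.Icc a b)) (hgpos : ∀ t ∈ Set.Icc a b, 0 < g t)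
    (hw : ContinuousOn w (Set.Icc a b))
    (hsub : ViscositySubsolution a b g w) (hsuper : ViscositySupersolution a b g w)
    (hwa : w a = 0) (hwb : w b = 0) :
    ∀ t ∈ Set.Icc a b, w t = min (∫ r in a..t, g r) (∫ r in t..b, g r) := by
  obtain ⟨G, hGd, hG⟩ := exists_hasDerivAt_of_continuousOn hab.le hg
  have hG' : ∀ x ∈ Ioo a b, deriv G x = g x := fun x hx => (hG x (Ioo_subset_Icc_self hx)).deriv
  have hint : ∀ {s t}, s ∈ Icc a b → t ∈ Icc a b → s ≤ t → ∫ r in s..t, g r = G t - G s :=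
    fun hs ht hst => intervalIntegral.integral_eq_sub_of_hasDerivAt
      (fun x hx => hG x (Icc_subset_Icc hs.1 ht.2 (by rwa [uIcc_of_le hst] at hx)))
      ((hg.mono (Icc_subset_Icc hs.1 ht.2)).intervalIntegrable_of_Icc hst)
  have ha : a ∈ Icc a b := left_mem_Icc.2 hab.le
  have hb : b ∈ Icc a b := right_mem_Icc.2 hab.le
  intro t ht
  rw [hint ha ht ht.1, hint ht hb ht.2]
  refine le_antisymm (le_min ?_ ?_) (hsuper.min_sub_le hw hGd hG'
    (fun x hx => hgpos x (Ioo_subset_Icc_self hx)) hwa hwb ht)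
  · linarith [hsub.antitoneOn_sub hw hGd hG' ha ht ht.1]
  · linarith [hsub.monotoneOn_add hw hGd hG' ht hb ht.2]
end
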